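/- Let n = 3l with l ≥ 1. The eigenvalue λ(1,1,n-2) of the orthogonality graph O_{n,3} = Cay((Z/3Z)^n, B3) corresponding to vectors of type (1,1,n-2) equals -multinomial(n; l,l,l)/(n-1). Equivalently, the coefficient of x y z^{n-2} in (x^3+y^3+z^3-3xyz)^l equals -3l, so that [multinomial(n; l,l,l)/multinomial(n; 1,1,n-2)]·(-3l) = -multinomial(n; l,l,l)/(n-1). -/

import Mathlib

open Finset MvPolynomial

/-- The coefficient of `x^{t0} y^{t1} z^{t2}` in `(x³+y³+z³-3xyz)^l`. -/
noncomputable def coeffW (l t0 t1 t2 : ℕ) : ℤ :=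
  MvPolynomial.coeff
    (Finsupp.single (0 : Fin 3) t0 + Finsupp.single 1 t1 + Finsupp.single 2 t2)
    ((X 0 ^ 3 + X 1 ^ 3 + X 2 ^ 3 - 3 * X 0 * X 1 * X 2 : MvPolynomial (Fin 3) ℤ) ^ l)


noncomputable def P : MvPolynomial (Fin 3) ℤ :=
  X 0 ^ 3 + X 1 ^ 3 + X 2 ^ 3 - 3 * X 0 * X 1 * X 2

lemma P_eq : P = monomial (Finsupp.single 0 3) 1 + monomial (Finsupp.single 1 3) 1
    + monomial (Finsupp.single 2 3) 1
    + monomial (Finsupp.single 0 1 + Finsupp.single 1 1 + Finsupp.single 2 1) (-3) := by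
  simp only [P, X_pow_eq_monomial, sub_eq_add_neg]
  congr 1
  rw [show (3 : MvPolynomial (Fin 3) ℤ) = C 3 by simp, X, X, X, mul_assoc, mul_assoc,
      monomial_mul, monomial_mul, C_mul_monomial]
  simp [add_assoc, ← map_neg]

lemma coeff_mul_P (q : MvPolynomial (Fin 3) ℤ) (d : Fin 3 →₀ ℕ) :
    coeff d (q * P) =
    (if Finsupp.single 0 3 ≤ d then coeff (d - Finsupp.single 0 3) q else 0)
    + (if Finsupp.single 1 3 ≤ d then coeff (d - Finsupp.single 1 3) q else 0)
    + (if Finsupp.single 2 3 ≤ d then coeff (d - Finsupp.single 2 3) q else 0)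
    + (if (Finsupp.single 0 1 + Finsupp.single 1 1 + Finsupp.single 2 1) ≤ d then
        coeff (d - (Finsupp.single 0 1 + Finsupp.single 1 1 + Finsupp.single 2 1)) q * (-3)
        else 0) := by
  rw [P_eq, mul_add, mul_add, mul_add, coeff_add, coeff_add, coeff_add,
      coeff_mul_monomial', coeff_mul_monomial', coeff_mul_monomial', coeff_mul_monomial']
  simp

lemma coeffA : ∀ l : ℕ, coeff (Finsupp.single 2 (3*l)) (P ^ l) = 1 := by
  intro l
  induction l with
  | zero => simp
  | succ k ih =>
    rw [pow_succ, coeff_mul_P]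
    have h1 : ¬ (Finsupp.single (0:Fin 3) 3 ≤ Finsupp.single 2 (3*(k+1))) := by
      rw [Finsupp.le_def]; push_neg; exact ⟨0, by simp [Finsupp.single_apply]⟩
    have h2 : ¬ (Finsupp.single (1:Fin 3) 3 ≤ Finsupp.single 2 (3*(k+1))) := by
      rw [Finsupp.le_def]; push_neg; exact ⟨1, by simp [Finsupp.single_apply]⟩
    have h3 : Finsupp.single (2:Fin 3) 3 ≤ Finsupp.single 2 (3*(k+1)) := by
      rw [Finsupp.le_def]; intro a; fin_cases a <;> simp [Finsupp.single_apply] <;> omega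
    have h4 : ¬ ((Finsupp.single (0:Fin 3) 1 + Finsupp.single 1 1 + Finsupp.single 2 1)
        ≤ Finsupp.single 2 (3*(k+1))) := by
      rw [Finsupp.le_def]; push_neg
      exact ⟨0, by simp [Finsupp.single_apply]⟩
    have h5 : Finsupp.single (2:Fin 3) (3*(k+1)) - Finsupp.single 2 3
        = Finsupp.single 2 (3*k) := by
      ext a; fin_cases a <;> simp [Finsupp.tsub_apply, Finsupp.single_apply] <;> omega
    rw [if_neg h1, if_neg h2, if_pos h3, if_neg h4, h5, ih]
    ring

lemma coeffB : ∀ k : ℕ, coeff (Finsupp.single 0 1 + Finsupp.single 1 1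
    + Finsupp.single 2 (3*k+1)) (P ^ (k+1)) = -(3*(k+1)) := by
  intro k
  induction k with
  | zero =>
    rw [pow_one, P_eq]
    simp only [coeff_add, coeff_monomial]
    have e1 : ¬ (Finsupp.single (0:Fin 3) 3 = Finsupp.single 0 1 + Finsupp.single 1 1
        + Finsupp.single 2 (3*0+1)) := by
      intro h; have := congrArg (fun f => f 1) h; simp [Finsupp.single_apply] at this
    have e2 : ¬ (Finsupp.single (1:Fin 3) 3 = Finsupp.single 0 1 + Finsupp.single 1 1
        + Finsupp.single 2 (3*0+1)) := by
      intro h; have := congrArg (fun f => f 0) h; simp [Finsupp.single_apply] at this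
    have e3 : ¬ (Finsupp.single (2:Fin 3) 3 = Finsupp.single 0 1 + Finsupp.single 1 1
        + Finsupp.single 2 (3*0+1)) := by
      intro h; have := congrArg (fun f => f 0) h; simp [Finsupp.single_apply] at this
    rw [if_neg e1, if_neg e2, if_neg e3]
    norm_num
  | succ k ih =>
    rw [pow_succ, coeff_mul_P]
    set d := Finsupp.single (0:Fin 3) 1 + Finsupp.single 1 1
        + Finsupp.single 2 (3*(k+1)+1) with hd
    have h1 : ¬ (Finsupp.single (0:Fin 3) 3 ≤ d) := by
      rw [Finsupp.le_def]; push_neg; exact ⟨0, by simp [hd, Finsupp.single_apply]⟩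
    have h2 : ¬ (Finsupp.single (1:Fin 3) 3 ≤ d) := by
      rw [Finsupp.le_def]; push_neg; exact ⟨1, by simp [hd, Finsupp.single_apply]⟩
    have h3 : Finsupp.single (2:Fin 3) 3 ≤ d := by
      rw [Finsupp.le_def]; intro a
      fin_cases a <;> simp [hd, Finsupp.single_apply] <;> omega
    have h4 : (Finsupp.single (0:Fin 3) 1 + Finsupp.single 1 1 + Finsupp.single 2 1) ≤ d := by
      rw [Finsupp.le_def]; intro a
      fin_cases a <;> simp [hd, Finsupp.single_apply]
    have h5 : d - Finsupp.single 2 3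
        = Finsupp.single 0 1 + Finsupp.single 1 1 + Finsupp.single 2 (3*k+1) := by
      ext a; fin_cases a <;> simp [hd, Finsupp.tsub_apply, Finsupp.single_apply] <;> omega
    have h6 : d - (Finsupp.single 0 1 + Finsupp.single 1 1 + Finsupp.single 2 1)
        = Finsupp.single 2 (3*(k+1)) := by
      ext a; fin_cases a <;> simp [hd, Finsupp.tsub_apply, Finsupp.single_apply] <;> omega
    rw [if_neg h1, if_neg h2, if_pos h3, if_pos h4, h5, h6, ih, coeffA]
    push_cast; ring

lemma mult_eq (n : ℕ) (hn : 2 ≤ n) :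
    Nat.multinomial Finset.univ ![1, 1, n - 2] = n * (n - 1) := by
  have : (Finset.univ : Finset (Fin 3)) = insert 0 (insert 1 {2}) := by decide
  rw [this, Nat.multinomial_insert_one (by decide) (by simp),
      Nat.multinomial_insert_one (by decide) (by simp)]
  simp [Nat.multinomial_singleton]
  have h1 : 1+(n-2)+1 = n := by omega
  have h2 : n-2+1 = n-1 := by omega
  rw [h1, h2]

theorem stmt4 (l n : ℕ) (hl : 1 ≤ l) (hn : n = 3 * l) :
    coeffW l 1 1 (n - 2) = -(3 * l) ∧
    ((Nat.multinomial Finset.univ ![l, l, l] : ℚ) /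
        (Nat.multinomial Finset.univ ![1, 1, n - 2] : ℚ)) * (-(3 * l : ℚ))
      = -((Nat.multinomial Finset.univ ![l, l, l] : ℚ) / (n - 1 : ℚ)) := by
  obtain ⟨k, rfl⟩ : ∃ k, l = k + 1 := ⟨l - 1, by omega⟩
  subst hn
  constructor
  · have h := coeffB k
    rw [coeffW, show 3 * (k+1) - 2 = 3*k+1 by omega, ← P]
    rw [h]
    push_cast
    ring
  · have h2 : (2:ℕ) ≤ 3*(k+1) := by omega
    have hc : ((3*(k+1) * (3*(k+1) - 1) : ℕ) : ℚ)
        = (3*((k:ℚ)+1)) * ((3*((k:ℚ)+1)) - 1) := by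
      push_cast [show (1:ℕ) ≤ 3*(k+1) by omega]
      ring
    rw [mult_eq _ h2, hc]
    have hk : (0:ℚ) ≤ (k:ℚ) := Nat.cast_nonneg k
    have hN : (3*((k:ℚ)+1)) ≠ 0 := by positivity
    have hN1 : (3*((k:ℚ)+1)) - 1 ≠ 0 := by nlinarith
    have hgoal : ∀ M N : ℚ, N ≠ 0 → N - 1 ≠ 0 → M / (N*(N-1)) * (-N) = -(M/(N-1)) := by
      intro M N h0 h1
      field_simp
    have := hgoal ((Nat.multinomial Finset.univ ![k+1,k+1,k+1] : ℕ) : ℚ)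
      (3*((k:ℚ)+1)) hN hN1
    convert this using 2 <;> push_cast <;> ring
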